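/- arXiv:1510.07711 — 2 statements merged into one kernel-verified Lean document; each statement's English description precedes it below -/
import Mathlib

section
/- L¹ bound on the restricted-digit Fourier transform: there exists a constant C_q ∈ [1/log q, 1 + 3/log q] such that sup_{θ∈ℝ} Σ_{0 ≤ a < q^k} |F̂_{q^k}(θ + a/q^k)| ≪ (C_q · q · log q)^k, with implied constant depending only on q. -/
/-!
Splitting off the last digit, `n = q m + d`, factors `F̂_{q^{k+1}}(t) = g(t) · F̂_{q^k}(q t)` with the
one-digit sum `g(t) = ∑_{d < q, d ≠ a₀} e(d t)`. Grouping the sample points `θ + a / q^{k+1}` by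
`a mod q^k` bounds the L¹ sum at level `k + 1` by `sup_φ ∑_{b < q} |g(φ + b / q)|` times the L¹
sum at level `k` (at the point `q θ`).

For the one-digit sum, translate `φ` into `[0, 1/q)`. Then `g` is a Dirichlet kernel minus one
exponential; the two sample points nearest to an integer contribute at most `q - 1` each, and at
the others `sin π t ≥ π t (1 - t)` gives `|g(t)| ≤ 1 + (1/t + 1/(1 - t)) / π`. Summing yields a
harmonic sum, and altogether `∑_b |g(φ + b / q)| ≤ 3q - 4 + (2q/π)(1 + log q) ≤ q (log q + 3)`,
so `C_q = 1 + 3 / log q` and `C = 1` work.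
-/

open Finset Real Complex

/-- The Fourier transform `F̂_{q^k}(t) = ∑_{n < q^k} 1_A(n) e(nt)` of the set of
integers whose `k` base-`q` digits (with leading zeros) avoid `a₀`. -/
noncomputable def restrictedFourier (q a0 k : ℕ) (t : ℝ) : ℂ :=
  ∑ n ∈ Finset.range (q ^ k),
    if ∀ i < k, n / q ^ i % q ≠ a0 then
      Complex.exp (2 * Real.pi * Complex.I * ((n : ℝ) * t)) else 0

namespace RestrictedDigits

noncomputable def e (x : ℝ) : ℂ := cexp (2 * π * I * x)

lemma e_eq_exp_ofReal_mul_I (x : ℝ) : e x = cexp (↑(2 * π * x) * I) := by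
  rw [e]; push_cast; ring_nf

lemma e_add (x y : ℝ) : e (x + y) = e x * e y := by
  rw [e, e, e, ← Complex.exp_add]; push_cast; ring_nf

lemma e_periodic : Function.Periodic e 1 := fun x => by
  rw [e_add, show e 1 = 1 by simp [e], mul_one]

lemma norm_e (x : ℝ) : ‖e x‖ = 1 := by
  rw [e_eq_exp_ofReal_mul_I, Complex.norm_exp_ofReal_mul_I]

lemma e_nat_mul (n : ℕ) (t : ℝ) : e (n * t) = e t ^ n := by
  rw [e, e, ← Complex.exp_nat_mul]; push_cast; ring_nf

lemma norm_e_sub_one (x : ℝ) : ‖e x - 1‖ = 2 * |Real.sin (π * x)| := by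
  rw [e_eq_exp_ofReal_mul_I, mul_comm, norm_exp_I_mul_ofReal_sub_one, norm_mul, Real.norm_two,
    Real.norm_eq_abs]
  ring_nf

lemma periodic_e_nat_mul (n : ℕ) : Function.Periodic (fun t => e (n * t)) 1 := fun t => by
  simpa [mul_add] using (e_periodic.nat_mul n) (n * t)

lemma norm_sum_e_le (q : ℕ) {t : ℝ} (ht : Real.sin (π * t) ≠ 0) :
    ‖∑ d ∈ range q, e (d * t)‖ ≤ 1 / |Real.sin (π * t)| := by
  have hsin : 0 < |Real.sin (π * t)| := abs_pos.mpr ht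
  have hne : e t - 1 ≠ 0 := by
    rw [← norm_pos_iff, norm_e_sub_one]; positivity
  simp_rw [e_nat_mul]
  rw [geom_sum_eq (sub_ne_zero.mp hne), norm_div, norm_e_sub_one]
  calc ‖e t ^ q - 1‖ / (2 * |Real.sin (π * t)|) ≤ 2 / (2 * |Real.sin (π * t)|) := by
        gcongr
        calc ‖e t ^ q - 1‖ ≤ ‖e t ^ q‖ + ‖(1 : ℂ)‖ := norm_sub_le _ _
          _ = 2 := by rw [norm_pow, norm_e]; norm_num
    _ = 1 / |Real.sin (π * t)| := by field_simp

lemma pi_mul_mul_one_sub_le_sin {t : ℝ} (h0 : 0 ≤ t) (h1 : t ≤ 1) :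
    π * t * (1 - t) ≤ Real.sin (π * t) := by
  -- the cubic Taylor bound suffices on `[0, 1/2]`, and both sides are symmetric under `t ↦ 1 - t`
  have half : ∀ s : ℝ, 0 ≤ s → s ≤ 1 / 2 → π * s * (1 - s) ≤ Real.sin (π * s) := by
    intro s hs0 hs1
    have hcube := Real.sin_ge_sub_cube (mul_nonneg pi_pos.le hs0)
    have hpi : π ^ 2 ≤ 12 := by nlinarith [pi_lt_d2, pi_pos]
    have hs : 0 ≤ 6 - π ^ 2 * s := by nlinarith
    nlinarith [mul_nonneg (mul_nonneg pi_pos.le (mul_nonneg hs0 hs0)) hs]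
  rcases le_total t (1 / 2) with ht | ht
  · exact half t h0 ht
  · have := half (1 - t) (by linarith) (by linarith)
    rw [mul_one_sub π t, Real.sin_pi_sub, sub_sub_cancel] at this
    linarith

lemma norm_sum_e_le_of_mem_Ioo (q : ℕ) {t : ℝ} (ht0 : 0 < t) (ht1 : t < 1) :
    ‖∑ d ∈ range q, e (d * t)‖ ≤ (1 / t + 1 / (1 - t)) / π := by
  have hlow := pi_mul_mul_one_sub_le_sin ht0.le ht1.le
  have hpos : 0 < π * t * (1 - t) := mul_pos (mul_pos pi_pos ht0) (by linarith)
  have hsin : 0 < Real.sin (π * t) := hpos.trans_le hlow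
  calc ‖∑ d ∈ range q, e (d * t)‖ ≤ 1 / |Real.sin (π * t)| := norm_sum_e_le q hsin.ne'
    _ ≤ 1 / (π * t * (1 - t)) := by rw [abs_of_pos hsin]; gcongr
    _ = (1 / t + 1 / (1 - t)) / π := by
      have : 1 - t ≠ 0 := by linarith
      field_simp; ring

lemma sum_range_mul {M : Type*} [AddCommMonoid M] (f : ℕ → M) (m n : ℕ) :
    ∑ i ∈ range (m * n), f i = ∑ j ∈ range n, ∑ i ∈ range m, f (m * j + i) := by
  induction n with
  | zero => simp
  | succ n ih => rw [Nat.mul_succ, sum_range_add, ih, sum_range_succ]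

lemma periodic_sum_range_add_div {M : Type*} [AddCommMonoid M] {f : ℝ → M}
    (hf : Function.Periodic f 1) {q : ℕ} (hq : q ≠ 0) :
    Function.Periodic (fun φ => ∑ b ∈ range q, f (φ + b / q)) (1 / q) := fun φ => by
  obtain ⟨n, rfl⟩ : ∃ n, q = n + 1 := ⟨q - 1, by omega⟩
  have hn : ((n + 1 : ℕ) : ℝ) ≠ 0 := by positivity
  dsimp only
  rw [sum_range_succ, sum_range_succ']
  have hlast : φ + 1 / ↑(n + 1) + n / ↑(n + 1) = φ + 1 := by field_simp; push_cast; ring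
  rw [hlast, hf, Nat.cast_zero, zero_div, add_zero]
  congr 1
  exact sum_congr rfl fun b _ => by congr 1; push_cast; ring

lemma harmonic_eq_sum_range (n : ℕ) : (harmonic n : ℝ) = ∑ i ∈ range n, 1 / ((i : ℝ) + 1) := by
  simp [harmonic]

lemma two_mul_one_add_log_le {q : ℕ} (hq : 3 ≤ q) :
    2 * q * (1 + Real.log q) ≤ π * (q * Real.log q + 4) := by
  have hqR : (0 : ℝ) ≤ q := by positivity
  have hlog1 : 1 ≤ Real.log q := by
    rw [le_log_iff_exp_le (by positivity)]
    have : (3 : ℝ) ≤ q := by exact_mod_cast hq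
    linarith [exp_one_lt_d9]
  have hpi : 3 * (q * Real.log q + 4) ≤ π * (q * Real.log q + 4) :=
    mul_le_mul_of_nonneg_right pi_gt_three.le (by positivity)
  rcases lt_or_ge q 8 with hq8 | hq8
  · have : (q : ℝ) ≤ 7 := by exact_mod_cast Nat.le_of_lt_succ hq8
    nlinarith [mul_le_mul_of_nonneg_left hlog1 hqR]
  · have hlog2 : 2 ≤ Real.log q := by
      have : Real.log 8 ≤ Real.log q := log_le_log (by norm_num) (by exact_mod_cast hq8)
      have h8 : Real.log 8 = 3 * Real.log 2 := by
        rw [show (8 : ℝ) = 2 ^ 3 by norm_num, Real.log_pow]; norm_num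
      linarith [log_two_gt_d9]
    nlinarith [mul_le_mul_of_nonneg_left hlog2 hqR]

lemma digits_avoid_mul_add_iff {q a0 d : ℕ} (n k : ℕ) (hd : d < q) :
    (∀ i < k + 1, (q * n + d) / q ^ i % q ≠ a0) ↔ d ≠ a0 ∧ ∀ i < k, n / q ^ i % q ≠ a0 := by
  have hq : 0 < q := by omega
  have hdiv : (q * n + d) / q = n := by
    rw [add_comm, Nat.add_mul_div_left _ _ hq, Nat.div_eq_of_lt hd, zero_add]
  rw [Nat.forall_lt_succ_left]
  simp only [pow_zero, Nat.div_one, Nat.mul_add_mod_self_left, Nat.mod_eq_of_lt hd, pow_succ',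
    ← Nat.div_div_eq_div_mul, hdiv]

noncomputable def digitSum (q a0 : ℕ) (t : ℝ) : ℂ :=
  ∑ d ∈ range q, if d ≠ a0 then e (d * t) else 0

lemma restrictedFourier_eq (q a0 k : ℕ) (t : ℝ) :
    restrictedFourier q a0 k t =
      ∑ n ∈ range (q ^ k), if ∀ i < k, n / q ^ i % q ≠ a0 then e (n * t) else 0 := by
  simp only [restrictedFourier, e, ofReal_mul, ofReal_natCast]

lemma restrictedFourier_zero (q a0 : ℕ) (t : ℝ) : restrictedFourier q a0 0 t = 1 := by
  simp [restrictedFourier]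

lemma restrictedFourier_succ (q a0 k : ℕ) (t : ℝ) :
    restrictedFourier q a0 (k + 1) t = digitSum q a0 t * restrictedFourier q a0 k (q * t) := by
  rcases Nat.eq_zero_or_pos q with rfl | hq
  · simp [restrictedFourier_eq, digitSum]
  rw [restrictedFourier_eq, restrictedFourier_eq, digitSum, sum_mul_sum, sum_comm, pow_succ',
    sum_range_mul]
  refine sum_congr rfl fun n _ => sum_congr rfl fun d hd => ?_
  have hd : d < q := mem_range.mp hd
  have he : e (↑(q * n + d) * t) = e (d * t) * e (n * (q * t)) := by
    rw [← e_add]; push_cast; ring_nf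
  simp only [digits_avoid_mul_add_iff n k hd, he]
  by_cases h0 : d ≠ a0 <;> by_cases h1 : ∀ i < k, n / q ^ i % q ≠ a0 <;> simp [h0, h1]

lemma digitSum_periodic (q a0 : ℕ) : Function.Periodic (digitSum q a0) 1 := fun t => by
  simp only [digitSum, periodic_e_nat_mul _ t]

lemma restrictedFourier_periodic (q a0 k : ℕ) : Function.Periodic (restrictedFourier q a0 k) 1 :=
  fun t => by simp only [restrictedFourier_eq, periodic_e_nat_mul _ t]

lemma restrictedFourier_succ_shift (q a0 k a b : ℕ) (θ : ℝ) :
    restrictedFourier q a0 (k + 1) (θ + ↑(q ^ k * b + a) / (q : ℝ) ^ (k + 1)) =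
      digitSum q a0 (θ + a / (q : ℝ) ^ (k + 1) + b / q) *
        restrictedFourier q a0 k (q * θ + a / (q : ℝ) ^ k) := by
  rcases Nat.eq_zero_or_pos q with rfl | hq
  · simp [restrictedFourier_eq, digitSum]
  have hqR : (q : ℝ) ≠ 0 := by positivity
  have harg : θ + ↑(q ^ k * b + a) / (q : ℝ) ^ (k + 1) = θ + a / (q : ℝ) ^ (k + 1) + b / q := by
    push_cast; field_simp; ring
  have hshift : q * (θ + a / (q : ℝ) ^ (k + 1) + b / q) = q * θ + a / (q : ℝ) ^ k + b * 1 := by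
    field_simp; ring
  rw [harg, restrictedFourier_succ, hshift, (restrictedFourier_periodic q a0 k).nat_mul b]

lemma sum_norm_restrictedFourier_succ_le {q a0 : ℕ} {B : ℝ}
    (hB : ∀ φ, ∑ b ∈ range q, ‖digitSum q a0 (φ + b / q)‖ ≤ B) (k : ℕ) (θ : ℝ) :
    ∑ a ∈ range (q ^ (k + 1)), ‖restrictedFourier q a0 (k + 1) (θ + a / (q : ℝ) ^ (k + 1))‖ ≤
      B * ∑ a ∈ range (q ^ k), ‖restrictedFourier q a0 k (q * θ + a / (q : ℝ) ^ k)‖ := by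
  rw [pow_succ, sum_range_mul, sum_comm, mul_sum]
  simp only [← Nat.cast_pow]
  refine sum_le_sum fun a _ => ?_
  simp only [Nat.cast_pow, restrictedFourier_succ_shift, norm_mul, ← sum_mul]
  exact mul_le_mul_of_nonneg_right (hB _) (norm_nonneg _)

section

variable {q a0 : ℕ}

lemma digitSum_eq (ha0 : a0 < q) (t : ℝ) :
    digitSum q a0 t = ∑ d ∈ range q, e (d * t) - e (a0 * t) := by
  rw [digitSum, eq_sub_iff_add_eq,
    ← sum_ite_eq_of_mem' _ _ (fun d : ℕ => e (d * t)) (mem_range.mpr ha0), ← sum_add_distrib]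
  refine sum_congr rfl fun d _ => ?_
  by_cases h : d = a0 <;> simp [h]

lemma norm_digitSum_le (ha0 : a0 < q) (t : ℝ) : ‖digitSum q a0 t‖ ≤ q - 1 := by
  calc ‖digitSum q a0 t‖ ≤ ∑ d ∈ range q, ‖if d ≠ a0 then e (d * t) else 0‖ := norm_sum_le _ _
    _ = ∑ d ∈ range q, (1 - if d = a0 then 1 else 0) := by
      refine sum_congr rfl fun d _ => ?_
      by_cases h : d = a0 <;> simp [h, norm_e]
    _ = q - 1 := by simp [sum_sub_distrib, ha0]

lemma norm_digitSum_le_of_mem_Ioo (ha0 : a0 < q) {t : ℝ} (ht0 : 0 < t) (ht1 : t < 1) :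
    ‖digitSum q a0 t‖ ≤ 1 + (1 / t + 1 / (1 - t)) / π := by
  rw [digitSum_eq ha0]
  calc _ ≤ ‖∑ d ∈ range q, e (d * t)‖ + ‖e (a0 * t)‖ := norm_sub_le _ _
    _ ≤ _ := by rw [norm_e, add_comm]; gcongr; exact norm_sum_e_le_of_mem_Ioo q ht0 ht1

lemma sum_norm_digitSum_le_of_mem_Ico (ha0 : a0 < q) (hq : 2 ≤ q) {φ : ℝ} (hφ0 : 0 ≤ φ)
    (hφ1 : φ < 1 / q) :
    ∑ b ∈ range q, ‖digitSum q a0 (φ + b / q)‖ ≤ 3 * q - 4 + 2 * q / π * harmonic (q - 2) := by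
  obtain ⟨n, rfl⟩ : ∃ n, q = n + 2 := ⟨q - 2, by omega⟩
  set Q : ℝ := ((n + 2 : ℕ) : ℝ) with hQ
  have hQpos : 0 < Q := by positivity
  have hmid : ∀ i ∈ range n, ‖digitSum (n + 2) a0 (φ + ↑(i + 1) / Q)‖ ≤
      1 + Q / π * (1 / ((i : ℝ) + 1) + 1 / (((n - 1 - i : ℕ) : ℝ) + 1)) := by
    intro i hi
    have hi : i < n := mem_range.mp hi
    have hcast : (((n - 1 - i : ℕ) : ℝ) + 1) = n - i := by
      rw [Nat.cast_sub (by omega), Nat.cast_sub (by omega)]; push_cast; ring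
    have hiR : (i : ℝ) + 1 ≤ n := by exact_mod_cast hi
    set t := φ + ↑(i + 1) / Q
    have ht0 : (i + 1) / Q ≤ t := by simp only [t]; push_cast; linarith
    have ht1 : (n - i) / Q ≤ 1 - t := by
      have : φ * Q < 1 := by rwa [lt_div_iff₀ hQpos] at hφ1
      rw [div_le_iff₀ hQpos]; simp only [t, hQ] at this ⊢; push_cast at this ⊢
      field_simp; nlinarith
    have hpos0 : 0 < ((i : ℝ) + 1) / Q := by positivity
    have hpos1 : 0 < ((n : ℝ) - i) / Q := div_pos (by linarith) hQpos
    calc _ ≤ 1 + (1 / t + 1 / (1 - t)) / π :=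
          norm_digitSum_le_of_mem_Ioo ha0 (hpos0.trans_le ht0) (by linarith)
      _ ≤ 1 + (1 / ((i + 1) / Q) + 1 / ((n - i) / Q)) / π := by
          gcongr
      _ = _ := by rw [hcast]; field_simp
  have hsum : ∑ i ∈ range n, (1 + Q / π * (1 / ((i : ℝ) + 1) + 1 / (((n - 1 - i : ℕ) : ℝ) + 1)))
      = n + 2 * Q / π * harmonic n := by
    rw [sum_add_distrib, ← mul_sum, sum_add_distrib,
      sum_range_reflect (fun j => 1 / ((j : ℝ) + 1)) n, ← harmonic_eq_sum_range]
    simp; ring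
  rw [sum_range_succ, sum_range_succ']
  have hfirst := norm_digitSum_le ha0 (φ + ((0 : ℕ) : ℝ) / Q)
  have hlast := norm_digitSum_le ha0 (φ + ((n + 1 : ℕ) : ℝ) / Q)
  have hmid' := (sum_le_sum hmid).trans_eq hsum
  rw [Nat.add_sub_cancel]
  have hQn : Q = n + 2 := by push_cast [hQ]; ring
  push_cast at hfirst hlast hmid' ⊢
  linarith

lemma sum_norm_digitSum_le (ha0 : a0 < q) (hq : 3 ≤ q) (φ : ℝ) :
    ∑ b ∈ range q, ‖digitSum q a0 (φ + b / q)‖ ≤ q * (Real.log q + 3) := by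
  have hqR : (0 : ℝ) < q := by positivity
  have hper := periodic_sum_range_add_div ((digitSum_periodic q a0).comp norm) (q := q) (by omega)
  set φ₀ := φ - ⌊q * φ⌋ * (1 / q)
  have hφ₀ : φ₀ = Int.fract (q * φ) / q := by
    simp only [φ₀, Int.fract]; field_simp
  have hreduce := hper.sub_int_mul_eq (x := φ) ⌊q * φ⌋
  simp only [Function.comp_apply] at hreduce
  rw [← hreduce]
  have hφ₀0 : 0 ≤ φ₀ := by rw [hφ₀]; exact div_nonneg (Int.fract_nonneg _) hqR.le
  have hφ₀1 : φ₀ < 1 / q := by rw [hφ₀]; gcongr; exact Int.fract_lt_one _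
  have hharm : (harmonic (q - 2) : ℝ) ≤ 1 + Real.log q := by
    refine (harmonic_le_one_add_log _).trans ?_
    gcongr
    · exact_mod_cast Nat.pos_of_ne_zero (by omega)
    · exact_mod_cast Nat.sub_le q 2
  calc _ ≤ 3 * q - 4 + 2 * q / π * harmonic (q - 2) :=
        sum_norm_digitSum_le_of_mem_Ico ha0 (by omega) hφ₀0 hφ₀1
    _ ≤ 3 * q - 4 + 2 * q / π * (1 + Real.log q) := by gcongr
    _ ≤ q * (Real.log q + 3) := by
      have key : 2 * q / π * (1 + Real.log q) ≤ q * Real.log q + 4 := by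
        rw [div_mul_eq_mul_div, div_le_iff₀ pi_pos, mul_comm _ π]
        exact two_mul_one_add_log_le hq
      linarith

lemma sum_norm_restrictedFourier_le (ha0 : a0 < q) (hq : 3 ≤ q) (k : ℕ) (θ : ℝ) :
    ∑ a ∈ range (q ^ k), ‖restrictedFourier q a0 k (θ + a / (q : ℝ) ^ k)‖ ≤
      (q * (Real.log q + 3)) ^ k := by
  induction k generalizing θ with
  | zero => simp [restrictedFourier_zero]
  | succ k ih =>
    have hB : 0 ≤ (q : ℝ) * (Real.log q + 3) := by
      have : 0 ≤ Real.log q := Real.log_natCast_nonneg q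
      positivity
    calc _ ≤ q * (Real.log q + 3) * ∑ a ∈ range (q ^ k),
            ‖restrictedFourier q a0 k (q * θ + a / (q : ℝ) ^ k)‖ :=
          sum_norm_restrictedFourier_succ_le (sum_norm_digitSum_le ha0 hq) k θ
      _ ≤ q * (Real.log q + 3) * (q * (Real.log q + 3)) ^ k := by gcongr; exact ih _
      _ = _ := (pow_succ' _ _).symm

end

end RestrictedDigits

/-- L¹ bound: there exists `C_q ∈ [1/log q, 1 + 3/log q]` such that
`sup_θ ∑_{0 ≤ a < q^k} |F̂_{q^k}(θ + a/q^k)| ≪_q (C_q·q·log q)^k`. -/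
theorem restricted_fourier_L1_bound (q a0 : ℕ) (hq : 3 ≤ q) (ha0 : a0 < q) :
    ∃ Cq C : ℝ, 1 / Real.log q ≤ Cq ∧ Cq ≤ 1 + 3 / Real.log q ∧ 0 < C ∧
      ∀ (k : ℕ) (θ : ℝ),
        ∑ a ∈ Finset.range (q ^ k), ‖restrictedFourier q a0 k (θ + (a : ℝ) / (q : ℝ) ^ k)‖
          ≤ C * (Cq * q * Real.log q) ^ k := by
  have hlog : 0 < Real.log q := Real.log_pos (by exact_mod_cast (by omega : 1 < q))
  refine ⟨1 + 3 / Real.log q, 1, ?_, le_rfl, one_pos, fun k θ => ?_⟩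
  · have : 1 / Real.log q ≤ 3 / Real.log q := by gcongr; norm_num
    have : 0 ≤ 3 / Real.log q := by positivity
    linarith
  · have hCq : (1 + 3 / Real.log q) * q * Real.log q = q * (Real.log q + 3) := by
      field_simp
    rw [one_mul, hCq]
    exact RestrictedDigits.sum_norm_restrictedFourier_le ha0 hq k θ
end

section
/- Large sieve type estimate: for all θ ∈ ℝ and D ≥ 1, Σ_{D ≤ d < 2D} Σ_{0 < ℓ < d, (ℓ,d)=1} sup_{|ε|<1/(10D²)} |F̂_{q^k}(ℓ/d + θ + ε)| ≪ (D² + q^k)(C_q log q)^k, where C_q is the constant of the L¹ bound. -/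
/-!
Writing `n = ∑ fᵢ qⁱ` in base `q` factors `F̂_{q^k}(t)` as `∏_{i<k} g(qⁱ t)` with
`g(u) = ∑_{j ≠ a₀} e(ju)`, and the geometric sum gives `|g(u)| ≤ min(q, 1 + 1/(2‖u‖))`.
The product `G` of these majorants is the integrand of the L¹ bound, and the product rule
gives `|F̂'| ≤ 2π q^{k+2} G`. Gallagher's inequality
`sup_I |f| ≤ |I|⁻¹ ∫_I |f| + ∫_I |f'|` then bounds each supremum by `(5D² + 2π q^{k+2}) ∫_I G`,
with `I` the interval of radius `1/(10D²)` around `ℓ/d + θ`. Distinct fractions `ℓ/d` with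
`D ≤ d < 2D` are `1/(4D²)`-separated, so these intervals are disjoint and lie in
`(θ - 1, θ + 2]`, where `G` integrates to three periods.
-/

open Finset Real Complex

open MeasureTheory

noncomputable def digitSum (q a0 : ℕ) (u : ℝ) : ℂ :=
  ∑ j ∈ (range q).erase a0, exp (2 * π * I * (j * u))

/-- At integers `u - round u = 0` and `1 / 0 = 0`, so the majorant is `1` there and does not
bound `digitSum`; hence the non-integrality hypotheses below. -/
noncomputable def digitMajorant (q : ℕ) (u : ℝ) : ℝ :=
  min q (1 + 1 / (2 * |u - round u|))

noncomputable def digitMajorantProd (q k : ℕ) (t : ℝ) : ℝ :=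
  ∏ i ∈ range k, digitMajorant q (q ^ i * t)

lemma norm_exp_two_pi_I_mul (x : ℝ) : ‖cexp (2 * π * I * x)‖ = 1 := by
  rw [show 2 * π * I * x = ((2 * π * x : ℝ) : ℂ) * I by push_cast; ring,
    norm_exp_ofReal_mul_I]

lemma exp_two_pi_I_mul_sub_round (u : ℝ) :
    cexp (2 * π * I * (u - round u : ℝ)) = cexp (2 * π * I * u) := by
  rw [show 2 * π * I * (u - round u : ℝ) = 2 * π * I * u - round u * (2 * π * I) by
    push_cast; ring, Complex.exp_sub, exp_int_mul_two_pi_mul_I, div_one]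

lemma four_mul_abs_sub_round_le_norm_exp_sub_one (u : ℝ) :
    4 * |u - round u| ≤ ‖cexp (2 * π * I * u) - 1‖ := by
  set v := u - round u
  have hv : |π * v| ≤ π / 2 := by
    rw [abs_mul, abs_of_pos pi_pos]
    nlinarith [abs_sub_round u, pi_pos]
  have hsin := mul_abs_le_abs_sin hv
  rw [← exp_two_pi_I_mul_sub_round, show 2 * π * I * (v : ℂ) = I * (2 * π * v : ℝ) by
    push_cast; ring, norm_exp_I_mul_ofReal_sub_one, show 2 * π * v / 2 = π * v by ring, norm_mul,
    Real.norm_eq_abs, Real.norm_eq_abs, abs_two]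
  rw [abs_mul, abs_of_pos pi_pos] at hsin
  field_simp at hsin
  linarith

lemma norm_sum_erase_le {ι E : Type*} [DecidableEq ι] [SeminormedAddCommGroup E] (s : Finset ι)
    (f : ι → E) (a : ι) :
    ‖∑ i ∈ s.erase a, f i‖ ≤ ‖∑ i ∈ s, f i‖ + ‖f a‖ := by
  by_cases ha : a ∈ s
  · rw [sum_erase_eq_sub ha]
    exact norm_sub_le _ _
  · rw [erase_eq_of_notMem ha]
    exact le_add_of_nonneg_right (norm_nonneg _)

lemma norm_digitSum_le (q a0 : ℕ) (u : ℝ) : ‖digitSum q a0 u‖ ≤ q :=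
  calc ‖digitSum q a0 u‖ ≤ ∑ j ∈ (range q).erase a0, (1 : ℝ) := by
        refine norm_sum_le_of_le _ fun j _ => ?_
        exact_mod_cast (norm_exp_two_pi_I_mul (j * u)).le
    _ ≤ ∑ j ∈ range q, (1 : ℝ) :=
        sum_le_sum_of_subset_of_nonneg (erase_subset _ _) fun _ _ _ => zero_le_one
    _ = q := by simp

lemma norm_geom_sum_exp_le (q : ℕ) {u : ℝ} (hu : u ≠ round u) :
    ‖∑ j ∈ range q, cexp (2 * π * I * u) ^ j‖ ≤ 1 / (2 * |u - round u|) := by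
  have hv : 0 < |u - round u| := abs_pos.2 (sub_ne_zero.2 hu)
  have hz1 := four_mul_abs_sub_round_le_norm_exp_sub_one u
  have hnum := norm_sub_le (cexp (2 * π * I * u) ^ q) 1
  rw [norm_pow, norm_exp_two_pi_I_mul, one_pow, norm_one] at hnum
  rw [geom_sum_eq (fun h => by simp [h] at hz1; linarith), norm_div,
    div_le_div_iff₀ (by linarith) (by positivity)]
  nlinarith

lemma norm_digitSum_le_digitMajorant (q a0 : ℕ) {u : ℝ} (hu : u ≠ round u) :
    ‖digitSum q a0 u‖ ≤ digitMajorant q u := by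
  set z := cexp (2 * π * I * u)
  have hpow (j : ℕ) : cexp (2 * π * I * (j * u)) = z ^ j := by
    rw [← Complex.exp_nat_mul]; ring_nf
  refine le_min (norm_digitSum_le q a0 u) ?_
  calc ‖digitSum q a0 u‖ ≤ ‖∑ j ∈ range q, z ^ j‖ + ‖z ^ a0‖ := by
        simpa only [digitSum, hpow] using norm_sum_erase_le (range q) (z ^ ·) a0
    _ ≤ 1 / (2 * |u - round u|) + 1 := by
        rw [norm_pow, norm_exp_two_pi_I_mul, one_pow]
        exact add_le_add_left (norm_geom_sum_exp_le q hu) 1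
    _ = 1 + 1 / (2 * |u - round u|) := add_comm _ _

lemma hasDerivAt_exp_two_pi_I_mul (c t : ℝ) :
    HasDerivAt (fun s : ℝ => cexp (2 * π * I * (c * s)))
      (2 * π * I * c * cexp (2 * π * I * (c * t))) t := by
  have := ((hasDerivAt_id (t : ℂ)).const_mul (2 * π * I * c)).cexp.comp_ofReal
  simp only [mul_one, id] at this
  convert this using 1 <;> ring_nf

lemma hasDerivAt_digitSum (q a0 : ℕ) (u : ℝ) : HasDerivAt (digitSum q a0)
    (∑ j ∈ (range q).erase a0, 2 * π * I * j * cexp (2 * π * I * (j * u))) u :=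
  HasDerivAt.fun_sum fun j _ => hasDerivAt_exp_two_pi_I_mul j u

lemma norm_deriv_digitSum_le (q a0 : ℕ) (u : ℝ) :
    ‖deriv (digitSum q a0) u‖ ≤ 2 * π * q ^ 2 := by
  rw [(hasDerivAt_digitSum q a0 u).deriv]
  calc ‖∑ j ∈ (range q).erase a0, 2 * π * I * j * cexp (2 * π * I * (j * u))‖
      ≤ ∑ j ∈ (range q).erase a0, 2 * π * q := by
        refine norm_sum_le_of_le _ fun j hj => ?_
        have hjq : (j : ℝ) ≤ q := by exact_mod_cast (mem_range.1 (mem_of_mem_erase hj)).le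
        have he : ‖cexp (2 * π * I * (j * u))‖ = 1 := by
          exact_mod_cast norm_exp_two_pi_I_mul (j * u)
        rw [norm_mul, he, mul_one]
        simp only [norm_mul, norm_I, Complex.norm_real, Complex.norm_natCast, Complex.norm_two,
          Real.norm_of_nonneg pi_pos.le, mul_one]
        gcongr
    _ ≤ ∑ j ∈ range q, 2 * π * q :=
        sum_le_sum_of_subset_of_nonneg (erase_subset _ _) fun _ _ _ => by positivity
    _ = 2 * π * q ^ 2 := by rw [sum_const, card_range, nsmul_eq_mul]; ring

lemma digitMajorant_nonneg (q : ℕ) (u : ℝ) : 0 ≤ digitMajorant q u :=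
  le_min q.cast_nonneg (by positivity)

lemma one_le_digitMajorant {q : ℕ} (hq : 1 ≤ q) (u : ℝ) : 1 ≤ digitMajorant q u :=
  le_min (by exact_mod_cast hq) (le_add_of_nonneg_right (by positivity))

lemma digitMajorantProd_nonneg (q k : ℕ) (t : ℝ) : 0 ≤ digitMajorantProd q k t :=
  prod_nonneg fun _ _ => digitMajorant_nonneg q _

lemma digitMajorantProd_le (q k : ℕ) (t : ℝ) : digitMajorantProd q k t ≤ q ^ k := by
  simpa [digitMajorantProd] using prod_le_prod (s := range k)
    (fun i _ => digitMajorant_nonneg q (q ^ i * t))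
    fun i _ => min_le_left _ _

lemma measurable_digitMajorantProd (q k : ℕ) : Measurable (digitMajorantProd q k) := by
  unfold digitMajorantProd digitMajorant
  simp only [round_eq]
  fun_prop

lemma integrableOn_digitMajorantProd (q k : ℕ) (a b : ℝ) :
    IntegrableOn (digitMajorantProd q k) (Set.Ioc a b) := by
  refine Integrable.mono' (g := fun _ => (q : ℝ) ^ k) (integrableOn_const measure_Ioc_lt_top.ne)
    (measurable_digitMajorantProd q k).aestronglyMeasurable.restrict
    (Filter.Eventually.of_forall fun t => ?_)
  rw [Real.norm_of_nonneg (digitMajorantProd_nonneg q k t)]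
  exact digitMajorantProd_le q k t

lemma periodic_digitMajorantProd (q k : ℕ) : Function.Periodic (digitMajorantProd q k) 1 := by
  intro t
  refine prod_congr rfl fun i _ => ?_
  rw [digitMajorant, digitMajorant, show (q : ℝ) ^ i * (t + 1) = q ^ i * t + (q ^ i : ℕ) by
    push_cast; ring, round_add_natCast]
  push_cast
  ring_nf

lemma restrictedFourier_eq_prod (q a0 k : ℕ) (t : ℝ) :
    restrictedFourier q a0 k t = ∏ i ∈ range k, digitSum q a0 (q ^ i * t) := by
  -- `finFunctionFinEquiv` is the base-`q` expansion `f ↦ ∑ fᵢ qⁱ`, with inverse `n ↦ n / qⁱ % q`.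
  have hdigit (f : Fin k → Fin q) (i : Fin k) :
      (finFunctionFinEquiv f : ℕ) / q ^ (i : ℕ) % q = f i := by
    rw [← finFunctionFinEquiv_symm_apply_val, Equiv.symm_apply_apply]
  have hdigits (f : Fin k → Fin q) :
      (∀ i < k, (finFunctionFinEquiv f : ℕ) / q ^ i % q ≠ a0) ↔
        ∀ i : Fin k, (f i : ℕ) ≠ a0 :=
    ⟨fun h i => hdigit f i ▸ h i i.2, fun h i hi => hdigit f ⟨i, hi⟩ ▸ h ⟨i, hi⟩⟩
  let summand (i : Fin k) (j : Fin q) : ℂ :=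
    if (j : ℕ) ≠ a0 then exp (2 * π * I * ((j : ℕ) * (q ^ (i : ℕ) * t))) else 0
  calc restrictedFourier q a0 k t = ∑ f : Fin k → Fin q, ∏ i, summand i (f i) := by
        rw [restrictedFourier, ← Fin.sum_univ_eq_sum_range, ← finFunctionFinEquiv.sum_comp]
        refine Fintype.sum_congr _ _ fun f => ?_
        simp only [summand, prod_ite_zero, mem_univ, true_implies, ← hdigits f]
        refine if_congr Iff.rfl ?_ rfl
        rw [← Complex.exp_sum, finFunctionFinEquiv_apply]
        push_cast
        rw [sum_mul, mul_sum]
        exact congrArg cexp (Fintype.sum_congr _ _ fun i => by ring)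
    _ = ∏ i ∈ range k, digitSum q a0 (q ^ i * t) := by
        rw [← Fintype.prod_sum, prod_range]
        refine Fintype.prod_congr _ _ fun i => ?_
        rw [digitSum, ← filter_ne', sum_filter, ← Fin.sum_univ_eq_sum_range]
        push_cast
        rfl

lemma contDiff_restrictedFourier (q a0 k : ℕ) : ContDiff ℝ 1 (restrictedFourier q a0 k) := by
  unfold restrictedFourier
  refine ContDiff.sum fun n _ => ?_
  split_ifs
  · exact Complex.contDiff_exp.comp (contDiff_const.mul (contDiff_const.mul ofRealCLM.contDiff))
  · exact contDiff_const

lemma norm_restrictedFourier_le (q a0 k : ℕ) {t : ℝ}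
    (ht : ∀ i < k, (q : ℝ) ^ i * t ≠ round ((q : ℝ) ^ i * t)) :
    ‖restrictedFourier q a0 k t‖ ≤ digitMajorantProd q k t := by
  rw [restrictedFourier_eq_prod, norm_prod]
  exact prod_le_prod (fun _ _ => norm_nonneg _) fun i hi =>
    norm_digitSum_le_digitMajorant q a0 (ht i (mem_range.1 hi))

lemma norm_deriv_restrictedFourier_le {q : ℕ} (hq : 2 ≤ q) (a0 k : ℕ) {t : ℝ}
    (ht : ∀ i < k, (q : ℝ) ^ i * t ≠ round ((q : ℝ) ^ i * t)) :
    ‖deriv (restrictedFourier q a0 k) t‖ ≤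
      2 * π * q ^ (k + 2) * digitMajorantProd q k t := by
  set g := digitSum q a0
  set G := digitMajorantProd q k t
  have hG : 0 ≤ G := digitMajorantProd_nonneg q k t
  have hfactor (i : ℕ) :
      HasDerivAt (fun s => g (q ^ i * s)) ((q ^ i * 1 : ℝ) • deriv g (q ^ i * t)) t :=
    (hasDerivAt_digitSum q a0 _).differentiableAt.hasDerivAt.scomp t
      ((hasDerivAt_id t).const_mul _)
  have hF : HasDerivAt (restrictedFourier q a0 k)
      (∑ i ∈ range k, (∏ j ∈ (range k).erase i, g (q ^ j * t)) •
        ((q ^ i * 1 : ℝ) • deriv g (q ^ i * t))) t := by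
    rw [funext (restrictedFourier_eq_prod q a0 k)]
    exact HasDerivAt.fun_finsetProd fun i _ => hfactor i
  have hterm (i : ℕ) (hi : i ∈ range k) : ‖(∏ j ∈ (range k).erase i, g (q ^ j * t)) •
      ((q ^ i * 1 : ℝ) • deriv g (q ^ i * t))‖ ≤ 2 * π * q ^ 2 * G * q ^ i := by
    have hprod : ‖∏ j ∈ (range k).erase i, g (q ^ j * t)‖ ≤ G := by
      rw [norm_prod, show G = ∏ j ∈ range k, digitMajorant q (q ^ j * t) from rfl,
        ← mul_prod_erase _ _ hi]
      refine (prod_le_prod (fun _ _ => norm_nonneg _) fun j hj => ?_).trans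
        (le_mul_of_one_le_left (prod_nonneg fun _ _ => digitMajorant_nonneg q _)
          (one_le_digitMajorant (by omega) _))
      exact norm_digitSum_le_digitMajorant q a0 (ht j (mem_range.1 (mem_of_mem_erase hj)))
    rw [norm_smul, norm_smul, mul_one, Real.norm_of_nonneg (by positivity)]
    calc _ ≤ G * (q ^ i * (2 * π * q ^ 2)) := by
          gcongr
          exact norm_deriv_digitSum_le q a0 _
      _ = _ := by ring
  have hgeom : ∑ i ∈ range k, (q : ℝ) ^ i ≤ q ^ k := by
    exact_mod_cast (Nat.geomSum_lt hq fun i hi => mem_range.1 hi).le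
  rw [hF.deriv]
  calc _ ≤ ∑ i ∈ range k, 2 * π * q ^ 2 * G * q ^ i := norm_sum_le_of_le _ hterm
    _ = 2 * π * q ^ 2 * G * ∑ i ∈ range k, (q : ℝ) ^ i := by rw [mul_sum]
    _ ≤ 2 * π * q ^ 2 * G * q ^ k := by gcongr
    _ = _ := by ring

lemma norm_le_average_add_integral_norm_deriv {E : Type*} [NormedAddCommGroup E]
    [NormedSpace ℝ E] [CompleteSpace E] {h : ℝ → E} (hh : ContDiff ℝ 1 h) {a b y : ℝ}
    (hab : a < b) (hy : y ∈ Set.Icc a b) :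
    ‖h y‖ ≤ (b - a)⁻¹ * (∫ s in a..b, ‖h s‖) + ∫ s in a..b, ‖deriv h s‖ := by
  have hh' : Continuous (deriv h) := hh.continuous_deriv le_rfl
  set K := ∫ s in a..b, ‖deriv h s‖
  have hclose (z : ℝ) (hz : z ∈ Set.Icc a b) : ‖h y‖ ≤ ‖h z‖ + K := by
    have hftc : ∫ s in z..y, deriv h s = h y - h z :=
      intervalIntegral.integral_deriv_eq_sub (fun x _ => hh.differentiable one_ne_zero x)
        (hh'.intervalIntegrable _ _)
    have hsub : Set.uIoc z y ⊆ Set.Ioc a b :=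
      Set.Ioc_subset_Ioc (le_min hz.1 hy.1) (max_le hz.2 hy.2)
    calc ‖h y‖ ≤ ‖h z‖ + ‖h y - h z‖ := norm_le_insert' _ _
      _ ≤ ‖h z‖ + K := by
        rw [← hftc, show K = _ from intervalIntegral.integral_of_le hab.le]
        gcongr
        exact intervalIntegral.norm_integral_le_integral_norm_uIoc.trans
          (setIntegral_mono_set hh'.norm.integrableOn_Ioc
            (Filter.Eventually.of_forall fun _ => norm_nonneg _) hsub.eventuallyLE)
  have hint : IntervalIntegrable (fun s => ‖h s‖) volume a b :=
    hh.continuous.norm.intervalIntegrable a b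
  have hmean := intervalIntegral.integral_mono_on hab.le intervalIntegrable_const
    (hint.add intervalIntegrable_const) hclose
  rw [intervalIntegral.integral_const, intervalIntegral.integral_add hint intervalIntegrable_const,
    intervalIntegral.integral_const, smul_eq_mul, smul_eq_mul] at hmean
  have hba : 0 < b - a := sub_pos.2 hab
  have := mul_le_mul_of_nonneg_left hmean (inv_nonneg.2 hba.le)
  rwa [← mul_assoc, inv_mul_cancel₀ hba.ne', one_mul, mul_add, ← mul_assoc,
    inv_mul_cancel₀ hba.ne', one_mul] at this

lemma ae_forall_mul_ne_round {c : ℕ → ℝ} (hc : ∀ i, c i ≠ 0) :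
    ∀ᵐ t : ℝ, ∀ i, c i * t ≠ round (c i * t) := by
  refine ae_all_iff.2 fun i => measure_mono_null (t := Set.range fun m : ℤ => m / c i)
    (fun t ht => ⟨round (c i * t), ?_⟩) ((Set.countable_range _).measure_zero _)
  have ht' : c i * t = round (c i * t) := by simpa using ht
  simp only [← ht']
  field_simp [hc i]

lemma iSup_norm_restrictedFourier_le {q : ℕ} (hq : 2 ≤ q) (a0 k : ℕ) (x : ℝ) {δ : ℝ}
    (hδ : 0 < δ) :
    ⨆ ε ∈ Set.Ioo (-δ) δ, ‖restrictedFourier q a0 k (x + ε)‖ ≤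
      ((2 * δ)⁻¹ + 2 * π * q ^ (k + 2)) *
        ∫ t in Set.Ioc (x - δ) (x + δ), digitMajorantProd q k t := by
  set F := restrictedFourier q a0 k
  set A := ∫ t in Set.Ioc (x - δ) (x + δ), digitMajorantProd q k t
  have hA : 0 ≤ ((2 * δ)⁻¹ + 2 * π * q ^ (k + 2)) * A := mul_nonneg (by positivity)
    (setIntegral_nonneg measurableSet_Ioc fun t _ => digitMajorantProd_nonneg q k t)
  have hgeneric : ∀ᵐ t : ℝ, ∀ i, (q : ℝ) ^ i * t ≠ round ((q : ℝ) ^ i * t) :=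
    ae_forall_mul_ne_round fun i => pow_ne_zero i (by positivity)
  have hF : ∫ s in (x - δ)..(x + δ), ‖F s‖ ≤ A := by
    rw [intervalIntegral.integral_of_le (by linarith)]
    refine setIntegral_mono_ae (contDiff_restrictedFourier q a0 k).continuous.norm.integrableOn_Ioc
      (integrableOn_digitMajorantProd q k _ _) (hgeneric.mono fun t ht => ?_)
    exact norm_restrictedFourier_le q a0 k fun i _ => ht i
  have hF' : ∫ s in (x - δ)..(x + δ), ‖deriv F s‖ ≤ 2 * π * q ^ (k + 2) * A := by
    rw [intervalIntegral.integral_of_le (by linarith), ← integral_const_mul]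
    refine setIntegral_mono_ae
      ((contDiff_restrictedFourier q a0 k).continuous_deriv le_rfl).norm.integrableOn_Ioc
      ((integrableOn_digitMajorantProd q k _ _).const_mul _) (hgeneric.mono fun t ht => ?_)
    exact norm_deriv_restrictedFourier_le hq a0 k fun i _ => ht i
  refine Real.iSup_le (fun ε => Real.iSup_le (fun hε => ?_) hA) hA
  calc ‖F (x + ε)‖ ≤ ((x + δ) - (x - δ))⁻¹ * (∫ s in (x - δ)..(x + δ), ‖F s‖) +
        ∫ s in (x - δ)..(x + δ), ‖deriv F s‖ :=
        norm_le_average_add_integral_norm_deriv (contDiff_restrictedFourier q a0 k)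
          (by linarith) ⟨by linarith [hε.1], by linarith [hε.2]⟩
    _ ≤ (2 * δ)⁻¹ * A + 2 * π * q ^ (k + 2) * A := by
        rw [show (x + δ) - (x - δ) = 2 * δ by ring]
        gcongr
    _ = _ := by ring

lemma inv_mul_le_abs_div_sub_div {ℓ d ℓ' d' : ℕ} (hd : 0 < d) (hd' : 0 < d')
    (hc : ℓ.Coprime d) (hc' : ℓ'.Coprime d') (hne : (d, ℓ) ≠ (d', ℓ')) :
    ((d : ℝ) * d')⁻¹ ≤ |(ℓ : ℝ) / d - ℓ' / d'| := by
  have hcross : ℓ * d' ≠ ℓ' * d := by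
    intro h
    have hdd : d = d' := Nat.dvd_antisymm (hc.symm.dvd_of_dvd_mul_left ⟨ℓ', by linarith⟩)
      (hc'.symm.dvd_of_dvd_mul_left ⟨ℓ, by linarith⟩)
    subst hdd
    exact hne (by rw [Nat.eq_of_mul_eq_mul_right hd h])
  have hone : (1 : ℝ) ≤ |(ℓ : ℝ) * d' - ℓ' * d| := by
    have := Int.one_le_abs (sub_ne_zero.2 (Int.ofNat_inj.not.2 hcross))
    exact_mod_cast this
  rw [div_sub_div _ _ (by positivity) (by positivity), abs_div,
    abs_of_pos (by positivity : (0 : ℝ) < d * d'), inv_eq_one_div, mul_comm (d : ℝ) ℓ']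
  gcongr

lemma disjoint_Ioc_of_two_mul_le_abs_sub {x y δ : ℝ} (h : 2 * δ ≤ |x - y|) :
    Disjoint (Set.Ioc (x - δ) (x + δ)) (Set.Ioc (y - δ) (y + δ)) := by
  rw [Set.Ioc_disjoint_Ioc]
  rcases le_total y x with hyx | hxy
  · rw [abs_of_nonneg (sub_nonneg.2 hyx)] at h
    exact (min_le_right _ _).trans (le_trans (by linarith) (le_max_left _ _))
  · rw [abs_of_nonpos (sub_nonpos.2 hxy)] at h
    exact (min_le_left _ _).trans (le_trans (by linarith) (le_max_right _ _))

lemma sum_setIntegral_farey_le {f : ℝ → ℝ} (hf : ∀ t, 0 ≤ f t) (θ : ℝ)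
    (hfi : IntegrableOn f (Set.Ioc (θ - 1) (θ + 2))) {D : ℕ} {δ : ℝ}
    (hδ : δ ≤ (8 * (D : ℝ) ^ 2)⁻¹) (hδ1 : δ ≤ 1) :
    ∑ d ∈ Ico D (2 * D), ∑ ℓ ∈ (Ioo 0 d).filter (fun ℓ => ℓ.Coprime d),
        ∫ t in Set.Ioc ((ℓ : ℝ) / d + θ - δ) ((ℓ : ℝ) / d + θ + δ), f t ≤
      ∫ t in Set.Ioc (θ - 1) (θ + 2), f t := by
  set T := (Ico D (2 * D)).sigma fun d => (Ioo 0 d).filter (fun ℓ => ℓ.Coprime d)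
  set I : (Σ _ : ℕ, ℕ) → Set ℝ := fun p =>
    Set.Ioc ((p.2 : ℝ) / p.1 + θ - δ) ((p.2 : ℝ) / p.1 + θ + δ)
  have hmem {d ℓ : ℕ} (hp : ⟨d, ℓ⟩ ∈ T) :
      D ≤ d ∧ d < 2 * D ∧ 0 < ℓ ∧ ℓ < d ∧ ℓ.Coprime d := by
    simp only [T, mem_sigma, mem_Ico, mem_filter, mem_Ioo] at hp
    omega
  have hdisj : (T : Set (Σ _ : ℕ, ℕ)).Pairwise (Function.onFun Disjoint I) := by
    rintro ⟨d, ℓ⟩ hp ⟨d', ℓ'⟩ hp' hne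
    obtain ⟨hDd, hd2, hℓ, hℓd, hc⟩ := hmem hp
    obtain ⟨hDd', hd2', hℓ', hℓd', hc'⟩ := hmem hp'
    refine disjoint_Ioc_of_two_mul_le_abs_sub ?_
    have hd0 : (0 : ℝ) < d * d' := by
      have : 0 < d * d' := Nat.mul_pos (by omega) (by omega)
      exact_mod_cast this
    have hdd : (d : ℝ) * d' ≤ 4 * D ^ 2 := by
      have : d * d' ≤ 4 * D ^ 2 := by nlinarith
      exact_mod_cast this
    calc 2 * δ ≤ (4 * (D : ℝ) ^ 2)⁻¹ := by
          rw [show (4 * (D : ℝ) ^ 2)⁻¹ = 2 * (8 * (D : ℝ) ^ 2)⁻¹ by ring]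
          linarith
      _ ≤ ((d : ℝ) * d')⁻¹ := inv_anti₀ hd0 hdd
      _ ≤ _ := by
          rw [add_sub_add_right_eq_sub]
          exact inv_mul_le_abs_div_sub_div (by omega) (by omega) hc hc'
            (fun h => hne (by simp_all))
  have hsub : (⋃ p ∈ T, I p) ⊆ Set.Ioc (θ - 1) (θ + 2) := by
    refine Set.iUnion₂_subset fun ⟨d, ℓ⟩ hp => Set.Ioc_subset_Ioc ?_ ?_
    all_goals
      obtain ⟨-, -, -, hℓd, -⟩ := hmem hp
      have h0 : (0 : ℝ) ≤ ℓ / d := by positivity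
      have h1 : (ℓ : ℝ) / d ≤ 1 :=
        div_le_one_of_le₀ (by exact_mod_cast hℓd.le) (by positivity)
      linarith
  rw [sum_sigma', ← integral_biUnion_finset T (fun _ _ => measurableSet_Ioc) hdisj
    fun p hp => hfi.mono_set (hsub.trans' fun _ hx => Set.mem_biUnion hp hx)]
  exact setIntegral_mono_set hfi (Filter.Eventually.of_forall hf) hsub.eventuallyLE

lemma Function.Periodic.setIntegral_Ioc_sub_one_add_two {f : ℝ → ℝ} (hf : Function.Periodic f 1)
    (hfi : ∀ a b, IntervalIntegrable f volume a b) (θ : ℝ) :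
    ∫ t in Set.Ioc (θ - 1) (θ + 2), f t = 3 * ∫ t in (0 : ℝ)..1, f t := by
  rw [show θ + 2 = θ - 1 + (3 : ℤ) • (1 : ℝ) by norm_num; ring,
    ← intervalIntegral.integral_of_le (by norm_num), hf.intervalIntegral_add_zsmul_eq 3 _ hfi,
    hf.intervalIntegral_add_eq (θ - 1) 0, zsmul_eq_mul, zero_add]
  norm_num

lemma sum_iSup_norm_restrictedFourier_le {q : ℕ} (hq : 2 ≤ q) (a0 k D : ℕ) (θ : ℝ)
    {δ : ℝ} (hδ0 : 0 < δ) (hδ : δ ≤ (8 * (D : ℝ) ^ 2)⁻¹) (hδ1 : δ ≤ 1) :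
    ∑ d ∈ Ico D (2 * D), ∑ ℓ ∈ (Ioo 0 d).filter (fun ℓ => ℓ.Coprime d),
        ⨆ ε ∈ Set.Ioo (-δ) δ, ‖restrictedFourier q a0 k ((ℓ : ℝ) / d + θ + ε)‖ ≤
      ((2 * δ)⁻¹ + 2 * π * q ^ (k + 2)) *
        (3 * ∫ t in (0 : ℝ)..1, digitMajorantProd q k t) := by
  set c := (2 * δ)⁻¹ + 2 * π * q ^ (k + 2)
  have hGi := integrableOn_digitMajorantProd q k
  rw [← (periodic_digitMajorantProd q k).setIntegral_Ioc_sub_one_add_two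
    fun a b => intervalIntegrable_iff.2 (hGi _ _)]
  calc _ ≤ ∑ d ∈ Ico D (2 * D), ∑ ℓ ∈ (Ioo 0 d).filter (fun ℓ => ℓ.Coprime d),
        c * ∫ t in Set.Ioc ((ℓ : ℝ) / d + θ - δ) ((ℓ : ℝ) / d + θ + δ),
          digitMajorantProd q k t :=
        sum_le_sum fun d _ => sum_le_sum fun ℓ _ =>
          iSup_norm_restrictedFourier_le hq a0 k _ hδ0
    _ ≤ c * ∫ t in Set.Ioc (θ - 1) (θ + 2), digitMajorantProd q k t := by
        simp_rw [← mul_sum]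
        gcongr
        exact sum_setIntegral_farey_le (digitMajorantProd_nonneg q k) θ (hGi _ _) hδ hδ1

theorem restricted_fourier_large_sieve_general (q a0 : ℕ) (hq : 3 ≤ q) (Cq : ℝ)
    (hL1 : ∃ C1 > 0, ∀ k : ℕ,
      (∫ t in (0:ℝ)..1, ∏ i ∈ Finset.range k,
          min (q : ℝ) (1 + 1 / (2 * |(q : ℝ) ^ i * t - round ((q : ℝ) ^ i * t)|)))
        ≤ C1 * (Cq * Real.log q) ^ k) :
    ∃ C > 0, ∀ (k D : ℕ) (θ : ℝ), 1 ≤ D →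
      ∑ d ∈ Finset.Ico D (2 * D),
          ∑ ℓ ∈ (Finset.Ioo 0 d).filter (fun ℓ => Nat.Coprime ℓ d),
            ⨆ ε ∈ Set.Ioo (-(1 / (10 * (D : ℝ) ^ 2))) (1 / (10 * (D : ℝ) ^ 2)),
              ‖restrictedFourier q a0 k ((ℓ : ℝ) / d + θ + ε)‖
        ≤ C * ((D : ℝ) ^ 2 + (q : ℝ) ^ k) * (Cq * Real.log q) ^ k := by
  obtain ⟨C1, hC1, hL1⟩ := hL1
  refine ⟨21 * C1 * q ^ 2, by positivity, fun k D θ hD => ?_⟩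
  set δ : ℝ := 1 / (10 * (D : ℝ) ^ 2) with hδ
  have hD' : (1 : ℝ) ≤ D := by exact_mod_cast hD
  have hδ8 : δ ≤ (8 * (D : ℝ) ^ 2)⁻¹ := by
    rw [hδ, one_div]
    exact inv_anti₀ (by positivity) (by nlinarith)
  have hδ1 : δ ≤ 1 := by
    rw [hδ, div_le_one (by positivity)]
    nlinarith
  have hc : (2 * δ)⁻¹ + 2 * π * q ^ (k + 2) ≤ 7 * q ^ 2 * ((D : ℝ) ^ 2 + q ^ k) := by
    have hq' : (1 : ℝ) ≤ q ^ 2 := one_le_pow₀ (by exact_mod_cast (by omega : 1 ≤ q))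
    rw [show (2 * δ)⁻¹ = 5 * (D : ℝ) ^ 2 by rw [hδ]; field_simp; ring, pow_add]
    nlinarith [mul_le_mul_of_nonneg_right (by linarith [pi_lt_d2] : 2 * π ≤ 7)
      (by positivity : (0 : ℝ) ≤ q ^ k * q ^ 2),
      mul_le_mul_of_nonneg_right hq' (sq_nonneg (D : ℝ))]
  have hG : 0 ≤ ∫ t in (0 : ℝ)..1, digitMajorantProd q k t :=
    intervalIntegral.integral_nonneg zero_le_one fun t _ => digitMajorantProd_nonneg q k t
  calc _ ≤ ((2 * δ)⁻¹ + 2 * π * q ^ (k + 2)) *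
        (3 * ∫ t in (0 : ℝ)..1, digitMajorantProd q k t) :=
        sum_iSup_norm_restrictedFourier_le (by omega) a0 k D θ (by positivity) hδ8 hδ1
    _ ≤ 7 * q ^ 2 * ((D : ℝ) ^ 2 + q ^ k) * (3 * (C1 * (Cq * Real.log q) ^ k)) := by
        gcongr
        exact hL1 k
    _ = _ := by ring

/-- Large sieve type estimate: assuming the L¹ bound
`∫₀¹ ∏_{i<k} min(q, 1 + 1/(2‖q^i t‖)) dt ≪ (C_q log q)^k`, for all `θ ∈ ℝ` and `D ≥ 1`,
`∑_{D ≤ d < 2D} ∑_{0 < ℓ < d, (ℓ,d)=1} sup_{|ε|<1/(10D²)} |F̂_{q^k}(ℓ/d + θ + ε)|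
  ≪_q (D² + q^k)(C_q log q)^k`. -/
theorem restricted_fourier_large_sieve (q a0 : ℕ) (hq : 3 ≤ q) (ha0 : a0 < q)
    (Cq : ℝ) (hCq : 0 < Cq)
    (hL1 : ∃ C1 > 0, ∀ k : ℕ,
      (∫ t in (0:ℝ)..1, ∏ i ∈ Finset.range k,
          min (q : ℝ) (1 + 1 / (2 * |(q : ℝ) ^ i * t - round ((q : ℝ) ^ i * t)|)))
        ≤ C1 * (Cq * Real.log q) ^ k) :
    ∃ C > 0, ∀ (k D : ℕ) (θ : ℝ), 1 ≤ D →
      ∑ d ∈ Finset.Ico D (2 * D),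
          ∑ ℓ ∈ (Finset.Ioo 0 d).filter (fun ℓ => Nat.Coprime ℓ d),
            ⨆ ε ∈ Set.Ioo (-(1 / (10 * (D : ℝ) ^ 2))) (1 / (10 * (D : ℝ) ^ 2)),
              ‖restrictedFourier q a0 k ((ℓ : ℝ) / d + θ + ε)‖
        ≤ C * ((D : ℝ) ^ 2 + (q : ℝ) ^ k) * (Cq * Real.log q) ^ k :=
  restricted_fourier_large_sieve_general q a0 hq Cq hL1
end
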